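/- arXiv:2103.10272 — 2 statements merged into one kernel-verified Lean document; each statement's English description precedes it below -/
import Mathlib

section
/- Major-Minor Duality: if f is a chromatic/whole tone musical icosahedron such that for every x the points f(x), f(x+4), f(x+7) form a golden triangle (all major triads golden), then the bijection g defined by g(x) = f(−x) is also a chromatic/whole tone musical icosahedron, and for every x the points g(x), g(x+3), g(x+7) form a golden triangle (all minor triads of g are golden). -/
noncomputable section

/-- Points of `ℝ³` with the Euclidean metric. -/
abbrev E3 : Type := EuclideanSpace ℝ (Fin 3)

/-- Constructor for explicit points of `E3`. -/
def pt (a b c : ℝ) : E3 := (WithLp.equiv 2 (Fin 3 → ℝ)).symm ![a, b, c]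

/-- The vertex set of the regular icosahedron with edge length 2: the twelve points
`(0,±1,±φ)`, `(±1,±φ,0)`, `(±φ,0,±1)` where `φ` is the golden ratio. -/
def icoVertexSet : Set E3 :=
  {p | ∃ a b : ℝ, (a = 1 ∨ a = -1) ∧ (b = Real.goldenRatio ∨ b = -Real.goldenRatio) ∧
    (p = pt 0 a b ∨ p = pt a b 0 ∨ p = pt b 0 a)}

/-- The type of vertices of the icosahedron. -/
abbrev IcoVert : Type := {p : E3 // p ∈ icoVertexSet}

/-- The icosahedron graph: two vertices are adjacent iff their Euclidean distance
equals 2 (the edge length). -/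
def icoGraph : SimpleGraph IcoVert where
  Adj u v := dist (u : E3) (v : E3) = 2
  symm := ⟨by intro u v h; rwa [dist_comm] at h⟩
  loopless := ⟨by intro u h; rw [dist_self] at h; norm_num at h⟩

/-- The chromatic neighboring condition. -/
def Chromatic (f : ZMod 12 → IcoVert) : Prop :=
  ∀ x : ZMod 12, icoGraph.Adj (f x) (f (x + 1))

/-- The Pythagorean-chain neighboring condition. -/
def Pythagorean (f : ZMod 12 → IcoVert) : Prop :=
  ∀ x : ZMod 12, icoGraph.Adj (f x) (f (x + 7))

/-- The whole-tone neighboring condition for the whole tone scale containing `C`. -/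
def WholeToneEven (f : ZMod 12 → IcoVert) : Prop :=
  ∀ x : ZMod 12, Even x → icoGraph.Adj (f x) (f (x + 2))

/-- The whole-tone neighboring condition for the whole tone scale containing `C♯`. -/
def WholeToneOdd (f : ZMod 12 → IcoVert) : Prop :=
  ∀ x : ZMod 12, Odd x → icoGraph.Adj (f x) (f (x + 2))

/-- A chromatic/whole tone musical icosahedron. -/
def ChromaticWT (f : ZMod 12 → IcoVert) : Prop :=
  Chromatic f ∧ (WholeToneEven f ∨ WholeToneOdd f)

/-- A Pythagorean/whole tone musical icosahedron. -/
def PythagoreanWT (f : ZMod 12 → IcoVert) : Prop :=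
  Pythagorean f ∧ (WholeToneEven f ∨ WholeToneOdd f)

/-- Musical isomorphism: post-composition with a graph automorphism. -/
def MusIso (f g : ZMod 12 → IcoVert) : Prop :=
  ∃ σ : icoGraph ≃g icoGraph, ∀ x : ZMod 12, g x = σ (f x)

/-- Hexagon-icosahedron symmetry: raising all tones by a whole tone corresponds to a
symmetry transformation of the icosahedron. -/
def HexSym (f : ZMod 12 → IcoVert) : Prop :=
  ∃ σ : icoGraph ≃g icoGraph, ∀ x : ZMod 12, f (x + 2) = σ (f x)

/-- Three points form a golden triangle: pairwise distances `2φ, 2φ, 2`. -/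
def IsGoldenTriangle (p q r : E3) : Prop :=
  ({dist p q, dist q r, dist p r} : Multiset ℝ) =
    ({2 * Real.goldenRatio, 2 * Real.goldenRatio, 2} : Multiset ℝ)

/-- Three points form a golden gnomon: pairwise distances `2, 2, 2φ`. -/
def IsGoldenGnomon (p q r : E3) : Prop :=
  ({dist p q, dist q r, dist p r} : Multiset ℝ) =
    ({2, 2, 2 * Real.goldenRatio} : Multiset ℝ)

lemma SimpleGraph.adj_comp_neg {V R : Type*} [AddCommGroup R] {G : SimpleGraph V} {f : R → V}
    {x d : R} (h : G.Adj (f (-(x + d))) (f (-(x + d) + d))) :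
    G.Adj (f (-x)) (f (-(x + d))) := by
  rw [show -(x + d) + d = -x by abel] at h
  exact h.symm

lemma IsGoldenTriangle.rev {p q r : E3} (h : IsGoldenTriangle p q r) : IsGoldenTriangle r q p := by
  unfold IsGoldenTriangle at h ⊢
  rw [dist_comm r q, dist_comm q p, dist_comm r p, ← h]
  exact Multiset.cons_swap _ _ _

section

variable {f : ZMod 12 → IcoVert}

lemma Chromatic.comp_neg (h : Chromatic f) : Chromatic (fun x => f (-x)) :=
  fun x => SimpleGraph.adj_comp_neg (h (-(x + 1)))

lemma WholeToneEven.comp_neg (h : WholeToneEven f) : WholeToneEven (fun x => f (-x)) :=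
  fun x hx => SimpleGraph.adj_comp_neg (h (-(x + 2)) (hx.add even_two).neg)

lemma WholeToneOdd.comp_neg (h : WholeToneOdd f) : WholeToneOdd (fun x => f (-x)) :=
  fun x hx => SimpleGraph.adj_comp_neg (h (-(x + 2)) (hx.add_even even_two).neg)

lemma ChromaticWT.comp_neg (h : ChromaticWT f) : ChromaticWT (fun x => f (-x)) :=
  ⟨h.1.comp_neg, h.2.imp WholeToneEven.comp_neg WholeToneOdd.comp_neg⟩

end

/-- **Major-Minor Duality.** If all major triads of a chromatic/whole tone musical
icosahedron `f` are set on golden triangles, then `x ↦ f (-x)` is again a chromatic/whole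
tone musical icosahedron, all of whose minor triads are set on golden triangles. -/
theorem major_minor_duality (f : ZMod 12 → IcoVert)
    (hf : Function.Bijective f) (hcwt : ChromaticWT f)
    (hmaj : ∀ x : ZMod 12, IsGoldenTriangle (f x : E3) (f (x + 4) : E3) (f (x + 7) : E3)) :
    Function.Bijective (fun x : ZMod 12 => f (-x)) ∧
    ChromaticWT (fun x : ZMod 12 => f (-x)) ∧
    ∀ x : ZMod 12,
      IsGoldenTriangle (f (-x) : E3) (f (-(x + 3)) : E3) (f (-(x + 7)) : E3) := by
  refine ⟨hf.comp neg_involutive.bijective, hcwt.comp_neg, fun x => ?_⟩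
  -- negation maps the minor triad on `x` to the major triad on `-(x + 7)`, read backwards
  have h := hmaj (-(x + 7))
  rw [show -(x + 7) + 4 = -(x + 3) by ring, show -(x + 7) + 7 = -x by ring] at h
  exact h.rev

end
end

section
/- There are exactly 60 three-element subsets of the vertex set of the icosahedron (the 12 points (0,±1,±φ), (±1,±φ,0), (±φ,0,±1) in ℝ³) that form a golden triangle, i.e., whose pairwise Euclidean distances are 2φ, 2φ, 2. -/
/-!
Twice each vertex coordinate lies in `ℤ√5` (with `2φ = 1 + √5`), hence so do four times the
squared distances between vertices. Since `ℤ√5 → ℝ` is injective, being a golden triangle becomes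
a decidable property of triples of indices `(k, ±1, ±1)` of the twelve vertices, and the count is a
finite computation: each of the 30 edges is the base of exactly two golden triangles.
-/

noncomputable section

open Zsqrtd

theorem Multiset.map_eq_map_iff_of_injOn {α β : Type*} {f : α → β} {S : Set α}
    {s t : Multiset α} (hf : Set.InjOn f S) (hs : ∀ x ∈ s, x ∈ S) (ht : ∀ x ∈ t, x ∈ S) :
    s.map f = t.map f ↔ s = t := by
  classical
  refine ⟨fun h => Multiset.ext.mpr fun a => ?_, congrArg _⟩
  by_cases ha : a ∈ S
  · have count_map_apply (u : Multiset α) (hu : ∀ x ∈ u, x ∈ S) :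
        (u.map f).count (f a) = u.count a := by
      rw [Multiset.count_map, Multiset.count_eq_card_filter_eq]
      congr 1
      exact Multiset.filter_congr fun x hx => hf.eq_iff ha (hu x hx)
    rw [← count_map_apply s hs, ← count_map_apply t ht, h]
  · rw [Multiset.count_eq_zero.mpr (ha ∘ hs a), Multiset.count_eq_zero.mpr (ha ∘ ht a)]

theorem Set.ncard_triples_eq_card_image {ι α : Type*} [Fintype ι] [DecidableEq ι] {f : ι → α}
    (hf : Function.Injective f) (P : α → α → α → Prop) (Q : ι × ι × ι → Prop)
    [DecidablePred Q] (hPQ : ∀ x, P (f x.1) (f x.2.1) (f x.2.2) ↔ Q x) :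
    {s : Set α | s ⊆ Set.range f ∧ ∃ p q r, s = {p, q, r} ∧ P p q r}.ncard =
      ((Finset.univ.filter Q).image fun x => ({x.1, x.2.1, x.2.2} : Finset ι)).card := by
  have himage : {s : Set α | s ⊆ Set.range f ∧ ∃ p q r, s = {p, q, r} ∧ P p q r} =
      (fun t : Finset ι => f '' t) ''
        ((Finset.univ.filter Q).image fun x => ({x.1, x.2.1, x.2.2} : Finset ι)) := by
    ext s
    simp only [Set.mem_ofPred_eq, Set.mem_image, Finset.mem_coe, Finset.mem_image,
      Finset.mem_filter, Finset.mem_univ, true_and, Prod.exists]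
    constructor
    · rintro ⟨hs, p, q, r, rfl, hpqr⟩
      simp only [Set.insert_subset_iff, Set.singleton_subset_iff] at hs
      obtain ⟨⟨u, rfl⟩, ⟨v, rfl⟩, ⟨w, rfl⟩⟩ := hs
      exact ⟨_, ⟨u, v, w, (hPQ (u, v, w)).mp hpqr, rfl⟩, by simp [Set.image_insert_eq]⟩
    · rintro ⟨_, ⟨u, v, w, hQ, rfl⟩, rfl⟩
      exact ⟨Set.image_subset_range _ _, f u, f v, f w, by simp [Set.image_insert_eq],
        (hPQ (u, v, w)).mpr hQ⟩
  have hinj : Function.Injective fun t : Finset ι => f '' t :=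
    (Set.image_injective.mpr hf).comp Finset.coe_injective
  rw [himage, Set.ncard_image_of_injective _ hinj, Set.ncard_coe_finset]

def toRealSqrt5 : ℤ√5 →+* ℝ := toReal (by norm_num)

theorem toRealSqrt5_injective : Function.Injective toRealSqrt5 := by
  refine toReal_injective _ fun n h => ?_
  have : n ≤ 2 := by nlinarith
  have : -2 ≤ n := by nlinarith
  interval_cases n <;> omega

theorem toRealSqrt5_one_add_sqrtd : toRealSqrt5 (1 + sqrtd) = 2 * Real.goldenRatio := by
  rw [Real.goldenRatio, mul_div_cancel₀ _ two_ne_zero]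
  simp [toRealSqrt5]

abbrev IcoIndex : Type := Fin 3 × ℤˣ × ℤˣ

/-- Twice the coordinates of `(0, a, bφ)` cyclically shifted `k` places, written in `ℤ√5` via
`2φ = 1 + √5`. -/
def doubledCoord (v : IcoIndex) (m : Fin 3) : ℤ√5 :=
  ![0, 2 * ((v.2.1 : ℤ) : ℤ√5), ((v.2.2 : ℤ) : ℤ√5) * (1 + sqrtd)] (m - v.1)

def icoVertex (v : IcoIndex) : E3 := WithLp.toLp 2 fun m => toRealSqrt5 (doubledCoord v m) / 2

def doubledSqDist (u v : IcoIndex) : ℤ√5 := ∑ m, (doubledCoord u m - doubledCoord v m) ^ 2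

theorem icoVertex_zero (a b : ℤˣ) :
    icoVertex (0, a, b) = pt 0 a (b * Real.goldenRatio) := by
  ext m
  fin_cases m <;>
    simp [icoVertex, doubledCoord, pt, toRealSqrt5_one_add_sqrtd, map_ofNat, mul_div_assoc]

theorem icoVertex_one (a b : ℤˣ) :
    icoVertex (1, a, b) = pt (b * Real.goldenRatio) 0 a := by
  ext m
  fin_cases m <;>
    simp [icoVertex, doubledCoord, pt, toRealSqrt5_one_add_sqrtd, map_ofNat, mul_div_assoc]

theorem icoVertex_two (a b : ℤˣ) :
    icoVertex (2, a, b) = pt a (b * Real.goldenRatio) 0 := by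
  ext m
  fin_cases m <;>
    simp [icoVertex, doubledCoord, pt, toRealSqrt5_one_add_sqrtd, map_ofNat, mul_div_assoc]

theorem doubledCoord_injective : Function.Injective doubledCoord := by
  unfold Function.Injective; decide +kernel

theorem icoVertex_injective : Function.Injective icoVertex := by
  intro u v h
  refine doubledCoord_injective (funext fun m => toRealSqrt5_injective ?_)
  simpa [icoVertex] using congrFun (congrArg WithLp.ofLp h) m

theorem range_icoVertex : Set.range icoVertex = icoVertexSet := by
  ext p
  constructor
  · rintro ⟨⟨k, a, b⟩, rfl⟩
    refine ⟨a, b * Real.goldenRatio, ?_, ?_, ?_⟩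
    · rcases Int.units_eq_one_or a with rfl | rfl <;> simp
    · rcases Int.units_eq_one_or b with rfl | rfl <;> simp
    · fin_cases k
      exacts [Or.inl (icoVertex_zero a b), Or.inr (Or.inr (icoVertex_one a b)),
        Or.inr (Or.inl (icoVertex_two a b))]
  · have exists_unit {x c : ℝ} : x = c ∨ x = -c → ∃ ε : ℤˣ, ε * c = x := by
      rintro (rfl | rfl)
      exacts [⟨1, by simp⟩, ⟨-1, by simp⟩]
    rintro ⟨a, b, ha, hb, hp⟩
    obtain ⟨a, rfl⟩ := exists_unit ha
    obtain ⟨b, rfl⟩ := exists_unit hb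
    rw [mul_one] at hp
    rcases hp with rfl | rfl | rfl
    exacts [⟨(0, a, b), icoVertex_zero a b⟩, ⟨(2, a, b), icoVertex_two a b⟩,
      ⟨(1, a, b), icoVertex_one a b⟩]

theorem sq_two_mul_dist_icoVertex (u v : IcoIndex) :
    (2 * dist (icoVertex u) (icoVertex v)) ^ 2 = toRealSqrt5 (doubledSqDist u v) := by
  rw [mul_pow, EuclideanSpace.dist_eq, Real.sq_sqrt (by positivity), Finset.mul_sum]
  simp only [doubledSqDist, map_sum, map_pow, map_sub, icoVertex, Real.dist_eq, sq_abs]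
  congr! 1 with m
  ring

theorem isGoldenTriangle_icoVertex_iff (u v w : IcoIndex) :
    IsGoldenTriangle (icoVertex u) (icoVertex v) (icoVertex w) ↔
      ({doubledSqDist u v, doubledSqDist v w, doubledSqDist u w} : Multiset (ℤ√5)) =
        {(2 * (1 + sqrtd)) ^ 2, (2 * (1 + sqrtd)) ^ 2, 16} := by
  have hinj : Set.InjOn (fun d : ℝ => (2 * d) ^ 2) (Set.Ici 0) := fun x hx y hy h => by
    simpa [sq_eq_sq₀, Set.mem_Ici.mp hx, Set.mem_Ici.mp hy] using h
  rw [IsGoldenTriangle, ← Multiset.map_eq_map_iff_of_injOn hinj (by simp)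
    (by simp [Real.goldenRatio_pos.le]), ← (Multiset.map_injective toRealSqrt5_injective).eq_iff]
  norm_num [sq_two_mul_dist_icoVertex, toRealSqrt5_one_add_sqrtd, map_ofNat]

theorem card_goldenTriangleIndices :
    ((Finset.univ.filter fun x : IcoIndex × IcoIndex × IcoIndex =>
      ({doubledSqDist x.1 x.2.1, doubledSqDist x.2.1 x.2.2, doubledSqDist x.1 x.2.2} :
        Multiset (ℤ√5)) = {(2 * (1 + sqrtd)) ^ 2, (2 * (1 + sqrtd)) ^ 2, 16}).image
      fun x => ({x.1, x.2.1, x.2.2} : Finset IcoIndex)).card = 60 := by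
  decide +kernel

/-- There are exactly 60 three-element subsets of the vertex set of the icosahedron that
form a golden triangle. -/
theorem sixty_golden_triangles :
    Set.ncard {s : Set E3 | s ⊆ icoVertexSet ∧
      ∃ p q r : E3, s = {p, q, r} ∧ IsGoldenTriangle p q r} = 60 := by
  rw [← range_icoVertex, Set.ncard_triples_eq_card_image icoVertex_injective _ _
    fun x => isGoldenTriangle_icoVertex_iff x.1 x.2.1 x.2.2]
  exact card_goldenTriangleIndices

end
end
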